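/- arXiv:1707.05631 — 4 statements merged into one kernel-verified Lean document; each statement's English description precedes it below -/
import Mathlib

section
/- For all half-integers J and K with J ≠ K and K ≠ 0, one has (2J+1)/((2K+1)(2|J−K|+1)) ≤ 3/4, with equality when J = 1 and K = 1/2. -/
/-!
Writing `d = |a - b|`, the triangle inequality gives `a + 1 ≤ b + d + 1`, and for `b, d ≥ 1`
one has `3 (b + 1) (d + 1) - 4 (b + d + 1) = (b - 1) (d - 1) + 2 (b d - 1) ≥ 0`,
with equality exactly at `b = d = 1`.
-/

lemma four_mul_add_add_one_le {b d : ℝ} (hb : 1 ≤ b) (hd : 1 ≤ d) :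
    4 * (b + d + 1) ≤ 3 * ((b + 1) * (d + 1)) := by
  nlinarith [mul_nonneg (sub_nonneg.mpr hb) (sub_nonneg.mpr hd)]

lemma add_one_div_le_three_quarters {a b : ℝ} (hb : 1 ≤ b) (hab : 1 ≤ |a - b|) :
    (a + 1) / ((b + 1) * (|a - b| + 1)) ≤ 3 / 4 := by
  have htriangle : a ≤ b + |a - b| := by linarith [le_abs_self (a - b)]
  rw [div_le_iff₀ (by positivity)]
  linarith [four_mul_add_add_one_le hb hab]

lemma Nat.one_le_abs_cast_sub_cast {a b : ℕ} (h : a ≠ b) : 1 ≤ |(a : ℝ) - b| := by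
  have hint : (1 : ℤ) ≤ |(a : ℤ) - b| := Int.one_le_abs (sub_ne_zero.mpr (by exact_mod_cast h))
  exact_mod_cast hint

/-- Half-integers `J, K` are encoded as `a = 2J`, `b = 2K`, so that `2J+1 = a+1`,
`2K+1 = b+1` and `2|J-K|+1 = |a-b|+1`. -/
theorem fidelity_le_three_quarters :
    (∀ a b : ℕ, a ≠ b → b ≠ 0 →
      ((a : ℝ) + 1) / (((b : ℝ) + 1) * (|(a : ℝ) - (b : ℝ)| + 1)) ≤ 3 / 4)
    ∧ ((2 : ℝ) + 1) / (((1 : ℝ) + 1) * (|(2 : ℝ) - (1 : ℝ)| + 1)) = 3 / 4 := by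
  refine ⟨fun a b hab hb => ?_, by norm_num⟩
  have hb1 : (1 : ℝ) ≤ b := by exact_mod_cast Nat.one_le_iff_ne_zero.mpr hb
  exact add_one_div_le_three_quarters hb1 (Nat.one_le_abs_cast_sub_cast hab)
end

section
/- For even M and half-integer threshold t with 0 ≤ t ≤ M/2, the tail of the distribution p_k^{(M,1/2)} = (2k+1)²/(2^M (M+1)) · binom(M+1, M/2+k+1) satisfies Σ_{k > t} p_k^{(M,1/2)} ≤ (M+1) · exp(−2t²/(M+1)). -/
open scoped Classical

/-!
Pascal's rule together with `(j + 1) C(n, j + 1) = (n - j) C(n, j)` gives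
`(2k + 1) C(2m + 1, m + k + 1) = (2m + 1) (C(2m, m + k) - C(2m, m + k + 1))`, so the `k`-th weight is
at most `(2m + 1) 4⁻ᵐ (C(2m, m + k) - C(2m, m + k + 1))` and the tail telescopes to
`(2m + 1) 4⁻ᵐ C(2m, m + k₀)`, where `k₀` is the first index above `t`. The Chernoff bound
`C(n, j) ≤ 2ⁿ exp (-2 (j - n/2)² / n)`, i.e. Hoeffding's inequality for a single value of a fair
binomial, finishes the proof.
-/

open Real Finset

theorem one_add_exp_le (s : ℝ) : 1 + exp s ≤ 2 * exp (s / 2 + s ^ 2 / 8) := by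
  have h : 1 + exp s = 2 * cosh (s / 2) * exp (s / 2) := by
    have hsq : exp s = exp (s / 2) * exp (s / 2) := by rw [← exp_add]; ring_nf
    have hinv : exp (-(s / 2)) * exp (s / 2) = 1 := by rw [← exp_add]; simp
    rw [cosh_eq]
    linear_combination hsq - hinv
  calc 1 + exp s = 2 * cosh (s / 2) * exp (s / 2) := h
    _ ≤ 2 * exp ((s / 2) ^ 2 / 2) * exp (s / 2) := by gcongr; exact cosh_le_exp_half_sq _
    _ = 2 * exp (s / 2 + s ^ 2 / 8) := by rw [mul_assoc, ← exp_add]; ring_nf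

theorem cast_choose_mul_exp_le (n j : ℕ) (s : ℝ) :
    (n.choose j : ℝ) * exp (s * j) ≤ (1 + exp s) ^ n := by
  rcases le_or_gt j n with hj | hj
  · rw [add_comm, add_pow]
    calc (n.choose j : ℝ) * exp (s * j) = exp s ^ j * 1 ^ (n - j) * n.choose j := by
          rw [← exp_nat_mul]; ring_nf
      _ ≤ _ := single_le_sum (f := fun i => exp s ^ i * 1 ^ (n - i) * (n.choose i : ℝ))
          (fun i _ => by positivity) (mem_range.2 (Nat.lt_succ_of_le hj))
  · rw [Nat.choose_eq_zero_of_lt hj]; simp; positivity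

theorem cast_choose_le_two_pow_mul_exp (n j : ℕ) :
    (n.choose j : ℝ) ≤ 2 ^ n * exp (-2 * (j - n / 2) ^ 2 / n) := by
  rcases Nat.eq_zero_or_pos n with rfl | hn
  · rcases j with _ | j <;> simp
  -- `s` minimises `n s² / 8 - s (j - n / 2)`
  set s : ℝ := 4 * (j - n / 2) / n with hs
  have hn' : (0 : ℝ) < n := by exact_mod_cast hn
  calc (n.choose j : ℝ) = n.choose j * exp (s * j) * exp (-(s * j)) := by
        rw [mul_assoc, ← exp_add]; simp
    _ ≤ (2 * exp (s / 2 + s ^ 2 / 8)) ^ n * exp (-(s * j)) := by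
        gcongr
        exact (cast_choose_mul_exp_le n j s).trans (by gcongr; exact one_add_exp_le s)
    _ = 2 ^ n * exp (-2 * (j - n / 2) ^ 2 / n) := by
        rw [mul_pow, ← exp_nat_mul, mul_assoc, ← exp_add]
        congr 2
        rw [hs]
        field_simp
        ring

theorem mul_cast_choose_succ_succ (n j : ℕ) :
    (2 * j + 1 - n : ℝ) * (n + 1).choose (j + 1) = (n + 1) * (n.choose j - n.choose (j + 1)) := by
  rcases le_or_gt j n with hj | hj
  · have h : (n.choose (j + 1) : ℝ) * (j + 1) = n.choose j * (n - j) := by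
      exact_mod_cast Nat.choose_succ_right_eq n j
    rw [Nat.choose_succ_succ']
    push_cast
    linear_combination 2 * h
  · rw [Nat.choose_eq_zero_of_lt hj, Nat.choose_eq_zero_of_lt (by omega : n < j + 1),
      Nat.choose_eq_zero_of_lt (by omega : n + 1 < j + 1)]
    simp

theorem Nat.choose_succ_le_choose_of_le_two_mul_add_one {n j : ℕ} (h : n ≤ 2 * j + 1) :
    n.choose (j + 1) ≤ n.choose j := by
  refine Nat.le_of_mul_le_mul_right ?_ j.succ_pos
  calc n.choose (j + 1) * (j + 1) = n.choose j * (n - j) := Nat.choose_succ_right_eq n j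
    _ ≤ n.choose j * (j + 1) := Nat.mul_le_mul_left _ (by omega)

/-- The weight `p_k^{(M,1/2)}` for `M = 2m`. -/
noncomputable def qubitDistribution (m k : ℕ) : ℝ :=
  (2 * (k : ℝ) + 1) ^ 2 / ((2 : ℝ) ^ (2 * m) * (2 * (m : ℝ) + 1)) *
    (((2 * m + 1).choose (m + k + 1) : ℕ) : ℝ)

theorem qubitDistribution_eq (m k : ℕ) :
    qubitDistribution m k =
      (2 * k + 1) * ((2 * m).choose (m + k) - (2 * m).choose (m + k + 1) : ℝ) / 2 ^ (2 * m) := by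
  have h := mul_cast_choose_succ_succ (2 * m) (m + k)
  push_cast at h
  rw [qubitDistribution, div_mul_eq_mul_div, div_eq_div_iff (by positivity) (by positivity)]
  linear_combination (2 * (k : ℝ) + 1) * 2 ^ (2 * m) * h

theorem qubitDistribution_le (m k : ℕ) (hk : k ≤ m) :
    qubitDistribution m k ≤
      (2 * m + 1) * ((2 * m).choose (m + k) - (2 * m).choose (m + k + 1) : ℝ) / 2 ^ (2 * m) := by
  have hmono : ((2 * m).choose (m + k + 1) : ℝ) ≤ (2 * m).choose (m + k) := by
    exact_mod_cast Nat.choose_succ_le_choose_of_le_two_mul_add_one (by omega)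
  rw [qubitDistribution_eq]
  gcongr

theorem sum_Ico_qubitDistribution_le (m a : ℕ) (ha : a ≤ m + 1) :
    ∑ k ∈ Ico a (m + 1), qubitDistribution m k ≤
      (2 * m + 1) * (2 * m).choose (m + a) / 2 ^ (2 * m) := by
  have htel := sum_Ico_sub (fun k => ((2 * m).choose (m + k) : ℝ)) ha
  have htop : (2 * m).choose (m + (m + 1)) = 0 := Nat.choose_eq_zero_of_lt (by omega)
  rw [htop, sum_sub_distrib] at htel
  push_cast at htel
  calc ∑ k ∈ Ico a (m + 1), qubitDistribution m k
      ≤ ∑ k ∈ Ico a (m + 1),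
          (2 * m + 1) * ((2 * m).choose (m + k) - (2 * m).choose (m + (k + 1)) : ℝ) / 2 ^ (2 * m) :=
        sum_le_sum fun k hk => qubitDistribution_le m k (by grind)
    _ = (2 * m + 1) * (2 * m).choose (m + a) / 2 ^ (2 * m) := by
        rw [← sum_div, ← mul_sum, sum_sub_distrib]
        congr 2
        linarith

theorem filter_range_lt_eq_Ico {t : ℝ} (ht : 0 ≤ t) (n : ℕ) :
    (range n).filter (fun k : ℕ => t < k) = Ico (⌊t⌋₊ + 1) n := by
  ext k
  simp only [mem_filter, mem_range, mem_Ico, ← Nat.floor_lt ht]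
  omega

theorem qubit_distribution_tail_bound_general (m : ℕ) (t : ℝ) (h0 : 0 ≤ t) :
    ∑ k ∈ (Finset.range (m + 1)).filter (fun k : ℕ => t < (k : ℝ)),
        (2 * (k : ℝ) + 1) ^ 2 / ((2 : ℝ) ^ (2 * m) * (2 * (m : ℝ) + 1)) *
          (((2 * m + 1).choose (m + k + 1) : ℕ) : ℝ)
      ≤ (2 * (m : ℝ) + 1) * Real.exp (-2 * t ^ 2 / (2 * (m : ℝ) + 1)) := by
  change ∑ k ∈ _, qubitDistribution m k ≤ _
  rw [filter_range_lt_eq_Ico h0]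
  set a := ⌊t⌋₊ + 1
  have hta : t < a := by simpa [a] using Nat.lt_floor_add_one t
  rcases lt_or_ge m a with hma | ham
  · rw [Ico_eq_empty (by omega), sum_empty]
    positivity
  have hm : (0 : ℝ) < m := by exact_mod_cast (show 0 < m by omega)
  have hexp : -2 * ((m + a : ℕ) - (2 * m : ℕ) / 2 : ℝ) ^ 2 / (2 * m : ℕ)
      ≤ -2 * t ^ 2 / (2 * m + 1) := by
    push_cast
    rw [show (m + a - 2 * m / 2 : ℝ) = a by ring, neg_mul, neg_mul, neg_div, neg_div, neg_le_neg_iff]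
    gcongr
    linarith
  calc ∑ k ∈ Ico a (m + 1), qubitDistribution m k
      ≤ (2 * m + 1) * (2 * m).choose (m + a) / 2 ^ (2 * m) :=
        sum_Ico_qubitDistribution_le m a (by omega)
    _ ≤ (2 * m + 1) * (2 ^ (2 * m) * exp (-2 * t ^ 2 / (2 * m + 1))) / 2 ^ (2 * m) := by
        gcongr
        exact (cast_choose_le_two_pow_mul_exp _ _).trans (by gcongr)
    _ = (2 * m + 1) * exp (-2 * t ^ 2 / (2 * m + 1)) := by field_simp

/-- Tail bound: for `M = 2m` spin-1/2 systems and any threshold `t` with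
`0 ≤ t ≤ M/2`, the tail of the distribution
`p_k^{(M,1/2)} = (2k+1)²/(2^M (M+1)) · C(M+1, M/2+k+1)` satisfies
`∑_{k > t} p_k ≤ (M+1) · exp(−2t²/(M+1))` (Hoeffding). -/
theorem qubit_distribution_tail_bound (m : ℕ) (t : ℝ) (h0 : 0 ≤ t) (h1 : t ≤ (m : ℝ)) :
    ∑ k ∈ (Finset.range (m + 1)).filter (fun k : ℕ => t < (k : ℝ)),
        (2 * (k : ℝ) + 1) ^ 2 / ((2 : ℝ) ^ (2 * m) * (2 * (m : ℝ) + 1)) *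
          (((2 * m + 1).choose (m + k + 1) : ℕ) : ℝ)
      ≤ (2 * (m : ℝ) + 1) * Real.exp (-2 * t ^ 2 / (2 * (m : ℝ) + 1)) :=
  qubit_distribution_tail_bound_general m t h0
end

section
/- For half-integers M ≥ N ≥ 0 and m with |m| ≤ M, the vector identity sqrt(binom(2M, M+m)) |M,m⟩ = Σ_n sqrt(binom(2N, N+n) · binom(2M−2N, M−N+m−n)) |N,n⟩ ⊗ |M−N, m−n⟩ holds, where |M,m⟩ denotes the normalized completely symmetric state of 2M qubits with M+m qubits in state |0⟩ and M−m qubits in state |1⟩, and the sum runs over n with |n| ≤ N and |m−n| ≤ M−N. -/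
/-- Number of qubits in state `|0⟩` in a computational basis state `f`. -/
def zeros {ι : Type*} [Fintype ι] (f : ι → Fin 2) : ℕ :=
  (Finset.univ.filter fun x => f x = 0).card

/-- The (coefficient function of the) normalized Dicke state of `card ι` qubits
with `k` qubits in state `|0⟩`: the symmetrization of `|0⟩^{⊗k} ⊗ |1⟩^{⊗(n−k)}`. -/
noncomputable def dicke {ι : Type*} [Fintype ι] (k : ℕ) (f : ι → Fin 2) : ℂ :=
  if zeros f = k then ((Real.sqrt (((Fintype.card ι).choose k : ℝ)) : ℝ) : ℂ)⁻¹ else 0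

/-! Rescaled by `√(card ι choose k)`, a Dicke state becomes the indicator of the basis states
with `k` zeros. Zero counts add across a bipartition, so the indicator for `a` zeros on the
whole register is the sum over `i` of the products of the indicators for `i` zeros on the
first part and `a - i` zeros on the second. -/

lemma zeros_le_card {ι : Type*} [Fintype ι] (f : ι → Fin 2) : zeros f ≤ Fintype.card ι :=
  Finset.card_filter_le _ _

lemma zeros_sum_type {α β : Type*} [Fintype α] [Fintype β] (f : α ⊕ β → Fin 2) :
    zeros f = zeros (f ∘ Sum.inl) + zeros (f ∘ Sum.inr) := by
  classical
  simp only [zeros, Finset.card_filter, Fintype.sum_sum_type, Function.comp_apply]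

lemma sqrt_choose_mul_dicke {ι : Type*} [Fintype ι] (k : ℕ) (f : ι → Fin 2) :
    ((Real.sqrt ((Fintype.card ι).choose k : ℝ) : ℝ) : ℂ) * dicke k f
      = if zeros f = k then 1 else 0 := by
  unfold dicke
  split_ifs with h
  · have hchoose : (0 : ℝ) < (Fintype.card ι).choose k := by
      exact_mod_cast Nat.choose_pos (h ▸ zeros_le_card f)
    have hsqrt : ((Real.sqrt ((Fintype.card ι).choose k : ℝ) : ℝ) : ℂ) ≠ 0 :=
      Complex.ofReal_ne_zero.mpr (Real.sqrt_pos.mpr hchoose).ne'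
    exact mul_inv_cancel₀ hsqrt
  · exact mul_zero _

lemma sum_range_ite_eq_mul_ite_eq_sub {R : Type*} [Semiring R] (x y a : ℕ) :
    ∑ i ∈ Finset.range (a + 1), (if x = i then (1 : R) else 0) * (if y = a - i then 1 else 0)
      = if x + y = a then 1 else 0 := by
  simp only [ite_mul, one_mul, zero_mul, Finset.sum_ite_eq, Finset.mem_range]
  by_cases hxy : x + y = a
  · rw [if_pos (by omega), if_pos (by omega), if_pos hxy]
  · rw [if_neg hxy]
    split_ifs with hx hy <;> first | rfl | omega

theorem dicke_splitting_general (p q a : ℕ) (f : Fin p ⊕ Fin q → Fin 2) :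
    ((Real.sqrt (((p + q).choose a : ℝ)) : ℝ) : ℂ) * dicke a f
      = ∑ i ∈ Finset.range (a + 1),
          ((Real.sqrt ((p.choose i : ℝ) * (q.choose (a - i) : ℝ)) : ℝ) : ℂ) *
            (dicke i (f ∘ Sum.inl) * dicke (a - i) (f ∘ Sum.inr)) := by
  have hsplit : ∀ i ∈ Finset.range (a + 1),
      ((Real.sqrt ((p.choose i : ℝ) * (q.choose (a - i) : ℝ)) : ℝ) : ℂ) *
          (dicke i (f ∘ Sum.inl) * dicke (a - i) (f ∘ Sum.inr))
        = (((Real.sqrt (p.choose i : ℝ) : ℝ) : ℂ) * dicke i (f ∘ Sum.inl)) *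
            (((Real.sqrt (q.choose (a - i) : ℝ) : ℝ) : ℂ) * dicke (a - i) (f ∘ Sum.inr)) := by
    intro i _
    rw [Real.sqrt_mul (Nat.cast_nonneg _), Complex.ofReal_mul]
    ring
  have hcard : Fintype.card (Fin p ⊕ Fin q) = p + q := by simp
  rw [Finset.sum_congr rfl hsplit, ← hcard, sqrt_choose_mul_dicke, zeros_sum_type,
    ← sum_range_ite_eq_mul_ite_eq_sub]
  refine Finset.sum_congr rfl fun i _ => ?_
  rw [← sqrt_choose_mul_dicke, ← sqrt_choose_mul_dicke, Fintype.card_fin, Fintype.card_fin]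

/-- Dicke-state splitting identity: with `p = 2N`, `q = 2(M−N)` qubits and
`a = M+m` zeros (`a ≤ p+q`), the state `sqrt(C(2M, M+m)) |M,m⟩` equals
`∑_n sqrt(C(2N, N+n) C(2M−2N, M−N+m−n)) |N,n⟩ ⊗ |M−N, m−n⟩`, where `|M,m⟩` is
the normalized completely symmetric (Dicke) state of `2M` qubits with `M+m`
qubits in `|0⟩`, and the index `i = N+n` runs over the admissible range. -/
theorem dicke_splitting (p q a : ℕ) (ha : a ≤ p + q) (f : Fin p ⊕ Fin q → Fin 2) :
    ((Real.sqrt (((p + q).choose a : ℝ)) : ℝ) : ℂ) * dicke a f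
      = ∑ i ∈ Finset.range (a + 1),
          ((Real.sqrt ((p.choose i : ℝ) * (q.choose (a - i) : ℝ)) : ℝ) : ℂ) *
            (dicke i (f ∘ Sum.inl) * dicke (a - i) (f ∘ Sum.inr)) :=
  dicke_splitting_general p q a f
end

section
/- Fix a half-integer l ≥ 0 and integers/half-integers k, J, N with the coupling constraints of angular momenta. Define f_k^{(l)} := (1/((2k+1)(2l+1))) · Σ_{j=|k−l|}^{min(NJ, k+l)} (2j+1). Then: (a) f_k^{(l)} ≤ 1 for all k, l; (b) if NJ ≥ k + l then f_k^{(l)} = 1; (c) if l > NJ and k > l then f_k^{(l)} ≤ 1/2; (d) if l ≤ NJ and k > NJ then f_k^{(l)} ≤ 1/2. -/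
/-- `truncFrac K L S` is the quantity `f_k^{(l)}` of the paper, written in
doubled-spin variables `K = 2k`, `L = 2l`, `S = 2NJ`:
`f = (∑_{j=|k−l|}^{min(NJ, k+l)} (2j+1)) / ((2k+1)(2l+1))`, where the sum runs
over `j` in integer steps (doubled variable `j` with parity `≡ K+L (mod 2)`)
and `2j+1` is the dimension of the spin-`j` irrep. -/
noncomputable def truncFrac (K L S : ℕ) : ℝ :=
  (∑ j ∈ (Finset.Icc (max K L - min K L) (min S (K + L))).filter
      (fun j => j % 2 = (K + L) % 2), ((j : ℝ) + 1)) /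
    (((K : ℝ) + 1) * ((L : ℝ) + 1))

/-!
For `L ≤ K` the admissible doubled spins are `j = (K - L) + 2i` for `i < n`, where `n` is the
number of terms kept, and the dimensions `j + 1` sum to `n (K - L + n)`. Without truncation
`n = L + 1` and this is `(K + 1)(L + 1)`. If the truncation point lies below `K`, then
`2n ≤ L + 1`: at most half of the `L + 1` terms survive, and they are the smallest ones.
-/

open Finset

lemma sum_range_add_two_mul_add_one (a n : ℕ) :
    ∑ i ∈ range n, (a + 2 * i + 1) = n * (a + n) := by
  induction n with
  | zero => simp
  | succ n ih => rw [sum_range_succ, ih]; ring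

lemma filter_Icc_mod_two_eq_image (a c : ℕ) :
    {j ∈ Icc a c | j % 2 = a % 2} = (range ((c + 2 - a) / 2)).image (a + 2 * ·) := by
  ext j
  simp only [mem_filter, mem_Icc, mem_image, mem_range]
  constructor
  · rintro ⟨⟨haj, hjc⟩, hpar⟩
    exact ⟨(j - a) / 2, by omega, by omega⟩
  · rintro ⟨i, hi, rfl⟩
    omega

lemma sum_filter_Icc_mod_two_add_one (a c : ℕ) :
    ∑ j ∈ Icc a c with j % 2 = a % 2, (j + 1) = (c + 2 - a) / 2 * (a + (c + 2 - a) / 2) := by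
  rw [filter_Icc_mod_two_eq_image, sum_image (fun x _ y _ h => by omega),
    ← sum_range_add_two_mul_add_one]

lemma two_mul_mul_add_le {n d m : ℕ} (h : 2 * n ≤ m) : 2 * (n * (d + n)) ≤ m * (d + m) := by
  nlinarith

lemma truncFrac_comm (K L S : ℕ) : truncFrac K L S = truncFrac L K S := by
  unfold truncFrac
  rw [max_comm, min_comm, add_comm K L, mul_comm]

lemma truncFrac_eq_of_le {K L : ℕ} (S : ℕ) (h : L ≤ K) :
    truncFrac K L S =
      (((min S (K + L) + 2 - (K - L)) / 2 * (K - L + (min S (K + L) + 2 - (K - L)) / 2) : ℕ)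
        : ℝ) / ((L + 1) * (K + 1) : ℕ) := by
  have hpar : (K + L) % 2 = (K - L) % 2 := by omega
  unfold truncFrac
  rw [max_eq_left h, min_eq_right h, hpar, ← sum_filter_Icc_mod_two_add_one, mul_comm]
  norm_cast

lemma truncFrac_le_one (K L S : ℕ) : truncFrac K L S ≤ 1 := by
  wlog h : L ≤ K generalizing K L
  · rw [truncFrac_comm]; exact this L K (by omega)
  rw [truncFrac_eq_of_le S h]
  refine div_le_one_of_le₀ (Nat.cast_le.mpr (Nat.mul_le_mul ?_ ?_)) (Nat.cast_nonneg _) <;>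
    omega

lemma truncFrac_eq_one {K L S : ℕ} (hS : K + L ≤ S) : truncFrac K L S = 1 := by
  wlog h : L ≤ K generalizing K L
  · rw [truncFrac_comm]; exact this (by omega) (by omega)
  have hn : (min S (K + L) + 2 - (K - L)) / 2 = L + 1 := by omega
  rw [truncFrac_eq_of_le S h, hn, show K - L + (L + 1) = K + 1 by omega]
  exact div_self (by positivity)

lemma truncFrac_le_half {K L S : ℕ} (hS : S < max K L) : truncFrac K L S ≤ 1 / 2 := by
  wlog h : L ≤ K generalizing K L
  · rw [truncFrac_comm]; exact this (by rwa [max_comm]) (by omega)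
  have hn : 2 * ((min S (K + L) + 2 - (K - L)) / 2) ≤ L + 1 := by omega
  have key := two_mul_mul_add_le (d := K - L) hn
  rw [show K - L + (L + 1) = K + 1 by omega] at key
  rw [truncFrac_eq_of_le S h, div_le_iff₀ (by positivity)]
  have := (Nat.cast_le (α := ℝ)).mpr key
  push_cast at this ⊢
  linarith

/-- Properties of the truncated dimension fraction `f_k^{(l)}` (in doubled-spin
variables `K = 2k`, `L = 2l`, `S = 2NJ`):
(a) `f ≤ 1` always; (b) if `NJ ≥ k+l` then `f = 1`;
(c) if `l > NJ` and `k > l` then `f ≤ 1/2`;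
(d) if `l ≤ NJ` and `k > NJ` then `f ≤ 1/2`. -/
theorem truncFrac_bounds (K L S : ℕ) :
    truncFrac K L S ≤ 1
    ∧ (K + L ≤ S → truncFrac K L S = 1)
    ∧ (S < L → L < K → truncFrac K L S ≤ 1 / 2)
    ∧ (L ≤ S → S < K → truncFrac K L S ≤ 1 / 2) :=
  ⟨truncFrac_le_one K L S, truncFrac_eq_one,
    fun hSL hLK => truncFrac_le_half (by omega),
    fun _ hSK => truncFrac_le_half (by omega)⟩
end
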